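/- arXiv:2306.15424 — 2 statements merged into one kernel-verified Lean document; each statement's English description precedes it below -/
import Mathlib

section
/- An open rectangle Ω = (0, L₂) × (0, L₁) ⊂ ℝ² with L₁ ≥ L₂ > 0 cannot be a uniform domain with constant C_U < L₁ / L₂; that is, any uniform-domain constant C_U for Ω satisfies C_U ≥ L₁/L₂. -/
/-!
Join `a = (L₂/2, ε)` to `b = (L₂/2, L₁ - ε)` by a uniform curve. It crosses the midline
`y = L₁/2` at a point `p` with `min (|p - a|, |p - b|) ≥ L₁/2 - ε`, while `p` lies within
`L₂/2` of a vertical side of the rectangle. The cigar condition at `p` gives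
`L₁/2 - ε ≤ C L₂/2` for every small `ε > 0`, hence `L₁ ≤ C L₂`.
-/

open Set Metric

/-- `Ω` is a uniform (Jones) domain with constant `C`. -/
def IsUniformDomain (Ω : Set (EuclideanSpace ℝ (Fin 2))) (C : ℝ) : Prop :=
  0 < C ∧
  ∀ a ∈ closure Ω, ∀ b ∈ closure Ω,
    ∃ (l : ℝ) (γ : ℝ → EuclideanSpace ℝ (Fin 2)),
      0 ≤ l ∧ γ 0 = a ∧ γ l = b ∧
      (∀ t ∈ Set.Icc 0 l, γ t ∈ closure Ω) ∧
      (∀ s ∈ Set.Icc 0 l, ∀ t ∈ Set.Icc 0 l, dist (γ s) (γ t) ≤ |s - t|) ∧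
      l ≤ C * dist a b ∧
      (∀ t ∈ Set.Icc 0 l,
        min (dist (γ t) a) (dist (γ t) b) ≤ C * infDist (γ t) (frontier Ω))

theorem IsUniformDomain.exists_apply_eq {Ω : Set (EuclideanSpace ℝ (Fin 2))} {C : ℝ}
    (hU : IsUniformDomain Ω C) {a b : EuclideanSpace ℝ (Fin 2)} (ha : a ∈ closure Ω)
    (hb : b ∈ closure Ω) (i : Fin 2) {h : ℝ} (hh : h ∈ Icc (a i) (b i)) :
    ∃ p ∈ closure Ω, p i = h ∧
      min (dist p a) (dist p b) ≤ C * infDist p (frontier Ω) := by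
  obtain ⟨l, γ, hl, hγ0, hγl, hγΩ, hγlip, -, hcigar⟩ := hU.2 a ha b hb
  have hγ : ContinuousOn γ (Icc 0 l) :=
    (LipschitzOnWith.of_dist_le_mul (K := 1) fun s hs t ht => by
      rw [NNReal.coe_one, one_mul]
      exact hγlip s hs t ht).continuousOn
  have hγi : ContinuousOn (fun t => γ t i) (Icc 0 l) :=
    (PiLp.continuous_apply 2 _ i).comp_continuousOn hγ
  obtain ⟨t, ht, hti⟩ := intermediate_value_Icc hl hγi (by rwa [hγ0, hγl])
  exact ⟨γ t, hγΩ t ht, hti, hcigar t ht⟩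

theorem EuclideanSpace.dist_eq_abs_sub_apply_zero {p q : EuclideanSpace ℝ (Fin 2)}
    (h : p 1 = q 1) : dist p q = |p 0 - q 0| := by
  simp [EuclideanSpace.dist_eq, Fin.sum_univ_two, h, Real.dist_eq, Real.sqrt_sq_eq_abs]

def openRect (L₁ L₂ : ℝ) : Set (EuclideanSpace ℝ (Fin 2)) :=
  {x | x 0 ∈ Ioo 0 L₂ ∧ x 1 ∈ Ioo 0 L₁}

section openRect

variable {L₁ L₂ C : ℝ}

theorem isOpen_openRect : IsOpen (openRect L₁ L₂) :=
  (isOpen_Ioo.preimage (by fun_prop)).inter (isOpen_Ioo.preimage (by fun_prop))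

theorem closure_openRect_subset : closure (openRect L₁ L₂) ⊆ {x | x 0 ∈ Icc 0 L₂} :=
  closure_minimal (fun _ hx => Ioo_subset_Icc_self hx.1)
    (isClosed_Icc.preimage (by fun_prop))

theorem mem_frontier_openRect (h2 : 0 < L₂) {x y : ℝ} (hx : x = 0 ∨ x = L₂)
    (hy : y ∈ Ioo 0 L₁) : !₂[x, y] ∈ frontier (openRect L₁ L₂) := by
  rw [frontier, isOpen_openRect.interior_eq]
  refine ⟨?_, fun hxy => ?_⟩
  · have hline : Continuous fun s : ℝ => (!₂[s, y] : EuclideanSpace ℝ (Fin 2)) := by fun_prop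
    have hmaps : (fun s : ℝ => !₂[s, y]) '' Ioo 0 L₂ ⊆ openRect L₁ L₂ := by
      rintro _ ⟨s, hs, rfl⟩
      exact ⟨hs, hy⟩
    refine closure_mono hmaps (image_closure_subset_closure_image hline ⟨x, ?_, rfl⟩)
    rw [closure_Ioo h2.ne]
    rcases hx with rfl | rfl <;> simp [h2.le]
  · have hx' : x ∈ Ioo 0 L₂ := hxy.1
    rcases hx with rfl | rfl
    exacts [lt_irrefl _ hx'.1, lt_irrefl _ hx'.2]

theorem infDist_frontier_openRect_le (h2 : 0 < L₂) {p : EuclideanSpace ℝ (Fin 2)}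
    (hp0 : p 0 ∈ Icc 0 L₂) (hp1 : p 1 ∈ Ioo 0 L₁) :
    infDist p (frontier (openRect L₁ L₂)) ≤ L₂ / 2 := by
  rcases le_total (p 0) (L₂ / 2) with h | h
  · calc infDist p (frontier (openRect L₁ L₂))
        ≤ dist p !₂[0, p 1] :=
          infDist_le_dist_of_mem (mem_frontier_openRect h2 (.inl rfl) hp1)
      _ = |p 0 - 0| := EuclideanSpace.dist_eq_abs_sub_apply_zero rfl
      _ ≤ L₂ / 2 := by rw [sub_zero, abs_of_nonneg hp0.1]; exact h
  · calc infDist p (frontier (openRect L₁ L₂))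
        ≤ dist p !₂[L₂, p 1] :=
          infDist_le_dist_of_mem (mem_frontier_openRect h2 (.inr rfl) hp1)
      _ = |p 0 - L₂| := EuclideanSpace.dist_eq_abs_sub_apply_zero rfl
      _ ≤ L₂ / 2 := by rw [abs_of_nonpos (by linarith [hp0.2])]; linarith

theorem IsUniformDomain.openRect_half_sub_le (hU : IsUniformDomain (openRect L₁ L₂) C)
    (h2 : 0 < L₂) {ε : ℝ} (hε : 0 < ε) (hεL : ε < L₁ / 2) :
    L₁ / 2 - ε ≤ C * (L₂ / 2) := by
  have ha : !₂[L₂ / 2, ε] ∈ openRect L₁ L₂ :=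
    ⟨⟨half_pos h2, half_lt_self h2⟩, hε, (by linarith : ε < L₁)⟩
  have hb : !₂[L₂ / 2, L₁ - ε] ∈ openRect L₁ L₂ :=
    ⟨⟨half_pos h2, half_lt_self h2⟩, (by linarith : 0 < L₁ - ε), sub_lt_self L₁ hε⟩
  obtain ⟨p, hpΩ, hp1, hcigar⟩ := hU.exists_apply_eq (subset_closure ha) (subset_closure hb) 1
    (h := L₁ / 2) ⟨(hεL.le : ε ≤ L₁ / 2), (by linarith : L₁ / 2 ≤ L₁ - ε)⟩
  have hp_dist (q : EuclideanSpace ℝ (Fin 2)) : |L₁ / 2 - q 1| ≤ dist p q :=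
    hp1 ▸ PiLp.dist_apply_le p q 1
  have hpa : L₁ / 2 - ε ≤ dist p !₂[L₂ / 2, ε] :=
    (le_abs_self (L₁ / 2 - ε)).trans (hp_dist !₂[L₂ / 2, ε])
  have hpb : L₁ / 2 - ε ≤ dist p !₂[L₂ / 2, L₁ - ε] :=
    (le_abs.2 (.inr (by linarith)) : L₁ / 2 - ε ≤ |L₁ / 2 - (L₁ - ε)|).trans
      (hp_dist !₂[L₂ / 2, L₁ - ε])
  calc L₁ / 2 - ε
      ≤ min (dist p !₂[L₂ / 2, ε]) (dist p !₂[L₂ / 2, L₁ - ε]) := le_min hpa hpb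
    _ ≤ C * infDist p (frontier (openRect L₁ L₂)) := hcigar
    _ ≤ C * (L₂ / 2) := mul_le_mul_of_nonneg_left
        (infDist_frontier_openRect_le h2 (closure_openRect_subset hpΩ)
          (by rw [hp1]; constructor <;> linarith)) hU.1.le

end openRect

theorem stmt10_general (L₁ L₂ : ℝ) (h2 : 0 < L₂) (C : ℝ)
    (hU : IsUniformDomain
      {x : EuclideanSpace ℝ (Fin 2) | x 0 ∈ Set.Ioo 0 L₂ ∧ x 1 ∈ Set.Ioo 0 L₁} C) :
    L₁ / L₂ ≤ C := by
  rw [div_le_iff₀ h2]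
  by_contra! hlt
  have hCL : 0 < C * L₂ := mul_pos hU.1 h2
  have hmid := hU.openRect_half_sub_le h2 (ε := (L₁ - C * L₂) / 4) (by linarith) (by linarith)
  linarith

theorem stmt10 (L₁ L₂ : ℝ) (h2 : 0 < L₂) (h12 : L₂ ≤ L₁) (C : ℝ)
    (hU : IsUniformDomain
      {x : EuclideanSpace ℝ (Fin 2) | x 0 ∈ Set.Ioo 0 L₂ ∧ x 1 ∈ Set.Ioo 0 L₁} C) :
    L₁ / L₂ ≤ C :=
  stmt10_general L₁ L₂ h2 C hU
end

section
/- Let A be a symmetric positive definite n×n matrix and M⁻¹ a symmetric positive definite preconditioner. Suppose there exists C₀ > 0 such that every v ∈ ℝⁿ admits a decomposition v = Σ_{j=0}^{N} R_jᵀ v_j with Σ_{j=0}^{N} v_jᵀ A_j v_j ≤ C₀² vᵀ A v, where A_j = R_j A R_jᵀ are SPD and M⁻¹ = Σ_{j=0}^{N} R_jᵀ A_j⁻¹ R_j. Then the smallest eigenvalue of M⁻¹A satisfies λ_min(M⁻¹A) ≥ C₀⁻². -/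
open Matrix Finset

theorem Matrix.PosSemidef.two_mul_dotProduct_mulVec_le {n : Type*} [Fintype n]
    {K : Matrix n n ℝ} (hK : K.PosSemidef) (x y : n → ℝ) :
    2 * (x ⬝ᵥ (K *ᵥ y)) ≤ x ⬝ᵥ (K *ᵥ x) + y ⬝ᵥ (K *ᵥ y) := by
  have hsymm : y ⬝ᵥ (K *ᵥ x) = x ⬝ᵥ (K *ᵥ y) := by
    rw [dotProduct_mulVec, ← mulVec_transpose, ← conjTranspose_eq_transpose_of_trivial,
      hK.isHermitian.eq, dotProduct_comm]
  have hnonneg : 0 ≤ (x - y) ⬝ᵥ (K *ᵥ (x - y)) := by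
    simpa only [star_trivial] using hK.dotProduct_mulVec_nonneg (x - y)
  simp only [mulVec_sub, sub_dotProduct, dotProduct_sub, hsymm] at hnonneg
  linarith

section AdditiveSchwarz

variable {ι n : Type*} [Fintype ι] [Fintype n]
  {m : ι → Type*} [∀ j, Fintype (m j)] [∀ j, DecidableEq (m j)]
  (R : ∀ j, Matrix (m j) n ℝ) {K : ∀ j, Matrix (m j) (m j) ℝ}

variable (K) in
noncomputable def additiveSchwarzPrecond : Matrix n n ℝ :=
  ∑ j, (R j)ᵀ * (K j)⁻¹ * R j

theorem dotProduct_additiveSchwarzPrecond_mulVec (x y : n → ℝ) :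
    x ⬝ᵥ (additiveSchwarzPrecond R K *ᵥ y) =
      ∑ j, (R j *ᵥ x) ⬝ᵥ ((K j)⁻¹ *ᵥ (R j *ᵥ y)) := by
  simp only [additiveSchwarzPrecond, sum_mulVec, dotProduct_sum, ← mulVec_mulVec]
  refine sum_congr rfl fun j _ => ?_
  rw [dotProduct_mulVec, vecMul_transpose]

theorem dotProduct_inv_additiveSchwarzPrecond_mulVec_le [DecidableEq n]
    (hK : ∀ j, (K j).PosDef) (v : n → ℝ) (vj : ∀ j, m j → ℝ)
    (hv : v = ∑ j, (R j)ᵀ *ᵥ vj j) :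
    v ⬝ᵥ ((additiveSchwarzPrecond R K)⁻¹ *ᵥ v) ≤ ∑ j, vj j ⬝ᵥ (K j *ᵥ vj j) := by
  set B := additiveSchwarzPrecond R K
  have henergy_nonneg : 0 ≤ ∑ j, vj j ⬝ᵥ (K j *ᵥ vj j) := sum_nonneg fun j _ => by
    simpa only [star_trivial] using (hK j).posSemidef.dotProduct_mulVec_nonneg (vj j)
  by_cases hB : IsUnit B.det
  swap
  · simpa only [nonsing_inv_apply_not_isUnit B hB, zero_mulVec, dotProduct_zero]
      using henergy_nonneg
  -- With `w = B⁻¹ v` and `u j = (K j)⁻¹ R j w`, the pairing `v ⬝ᵥ w` is `∑ j, vj j ⬝ᵥ K j u j`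
  -- while the energy of the `u j` is again `v ⬝ᵥ w`; Young's inequality closes the argument.
  set w := B⁻¹ *ᵥ v
  set u : ∀ j, m j → ℝ := fun j => (K j)⁻¹ *ᵥ (R j *ᵥ w)
  have hKu : ∀ j, K j *ᵥ u j = R j *ᵥ w := fun j => by
    rw [mulVec_mulVec, mul_nonsing_inv _ ((hK j).isUnit.map detMonoidHom), one_mulVec]
  have hpairing : v ⬝ᵥ w = ∑ j, vj j ⬝ᵥ (K j *ᵥ u j) := by
    conv_lhs => rw [hv]
    simp only [sum_dotProduct, hKu, mulVec_transpose, dotProduct_mulVec]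
  have hu_energy : ∑ j, u j ⬝ᵥ (K j *ᵥ u j) = v ⬝ᵥ w := by
    have hBw : B *ᵥ w = v := by rw [mulVec_mulVec, mul_nonsing_inv _ hB, one_mulVec]
    simp only [hKu, dotProduct_comm (u _)]
    rw [← dotProduct_additiveSchwarzPrecond_mulVec, hBw, dotProduct_comm]
  have hyoung : 2 * (v ⬝ᵥ w) ≤ ∑ j, vj j ⬝ᵥ (K j *ᵥ vj j) + ∑ j, u j ⬝ᵥ (K j *ᵥ u j) := by
    rw [hpairing, mul_sum, ← sum_add_distrib]
    exact sum_le_sum fun j _ => (hK j).posSemidef.two_mul_dotProduct_mulVec_le _ _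
  linarith

end AdditiveSchwarz

theorem stmt11_general {n N : ℕ} (A : Matrix (Fin n) (Fin n) ℝ)
    (nj : Fin (N + 1) → ℕ)
    (R : ∀ j : Fin (N + 1), Matrix (Fin (nj j)) (Fin n) ℝ)
    (hAj : ∀ j, (R j * A * (R j)ᵀ).PosDef)
    (C₀ : ℝ)
    (hstable : ∀ v : Fin n → ℝ, ∃ vj : ∀ j : Fin (N + 1), Fin (nj j) → ℝ,
      v = ∑ j, (R j)ᵀ *ᵥ vj j ∧
      ∑ j, vj j ⬝ᵥ ((R j * A * (R j)ᵀ) *ᵥ vj j) ≤ C₀^2 * (v ⬝ᵥ (A *ᵥ v))) :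
    -- with  M⁻¹ = ∑ j Rjᵀ Aj⁻¹ Rj,  vᵀMv ≤ C₀² vᵀAv for all v,
    -- i.e. λ_min(M⁻¹A) ≥ C₀⁻²
    ∀ v : Fin n → ℝ,
      v ⬝ᵥ ((∑ j, (R j)ᵀ * (R j * A * (R j)ᵀ)⁻¹ * R j)⁻¹ *ᵥ v) ≤
        C₀^2 * (v ⬝ᵥ (A *ᵥ v)) := by
  intro v
  obtain ⟨vj, hv, henergy⟩ := hstable v
  exact (dotProduct_inv_additiveSchwarzPrecond_mulVec_le R hAj v vj hv).trans henergy

theorem stmt11 {n N : ℕ} (A : Matrix (Fin n) (Fin n) ℝ) (hA : A.PosDef)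
    (nj : Fin (N + 1) → ℕ)
    (R : ∀ j : Fin (N + 1), Matrix (Fin (nj j)) (Fin n) ℝ)
    (hAj : ∀ j, (R j * A * (R j)ᵀ).PosDef)
    (C₀ : ℝ) (hC₀ : 0 < C₀)
    (hstable : ∀ v : Fin n → ℝ, ∃ vj : ∀ j : Fin (N + 1), Fin (nj j) → ℝ,
      v = ∑ j, (R j)ᵀ *ᵥ vj j ∧
      ∑ j, vj j ⬝ᵥ ((R j * A * (R j)ᵀ) *ᵥ vj j) ≤ C₀^2 * (v ⬝ᵥ (A *ᵥ v))) :
    -- with  M⁻¹ = ∑ j Rjᵀ Aj⁻¹ Rj,  vᵀMv ≤ C₀² vᵀAv for all v,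
    -- i.e. λ_min(M⁻¹A) ≥ C₀⁻²
    ∀ v : Fin n → ℝ,
      v ⬝ᵥ ((∑ j, (R j)ᵀ * (R j * A * (R j)ᵀ)⁻¹ * R j)⁻¹ *ᵥ v) ≤
        C₀^2 * (v ⬝ᵥ (A *ᵥ v)) :=
  stmt11_general A nj R hAj C₀ hstable
end
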